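/- arXiv:1201.2123 — 2 statements merged into one kernel-verified Lean document; each statement's English description precedes it below -/
import Mathlib

section
/- For all integers 2 ≤ t ≤ n, the Turán number of K_{2,t} satisfies ex(n, K_{2,t}) ≤ (1/2)·√(t-1)·n^{3/2} + n/2, and consequently ex(n, K_{2,t}) ≤ √t · n^{3/2}. -/
/-!
If `G` has no `K_{2,t}`, any two distinct vertices have at most `t - 1` common neighbours.
Counting paths of length two by their middle vertex and by their ends gives
`∑ d(v)(d(v) - 1) ≤ (t - 1) n (n - 1)`, and Cauchy–Schwarz `(2e)² ≤ n ∑ d(v)²` turns this into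
the quadratic inequality `4e² ≤ (t - 1) n³ + 2en`, whose larger root is at most
`½ √(t - 1) n^{3/2} + n/2`.
-/

open Finset

namespace SimpleGraph

variable {V : Type*} [Fintype V] [DecidableEq V] (G : SimpleGraph V) [DecidableRel G.Adj]

theorem exists_completeBipartite_two_of_le_card_inter_neighborFinset {a b : V} (hab : a ≠ b)
    {t : ℕ} (ht : t ≤ #(G.neighborFinset a ∩ G.neighborFinset b)) :
    ∃ A B : Finset V, Disjoint A B ∧ #A = 2 ∧ #B = t ∧ ∀ x ∈ A, ∀ y ∈ B, G.Adj x y := by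
  obtain ⟨B, hBsub, rfl⟩ := exists_subset_card_eq ht
  have hB : ∀ y ∈ B, G.Adj a y ∧ G.Adj b y := fun y hy => by simpa using hBsub hy
  refine ⟨{a, b}, B, ?_, card_pair hab, rfl, ?_⟩
  · rw [Finset.disjoint_left]
    rintro x hx hxB
    rcases mem_insert.mp hx with rfl | hx
    · exact G.loopless.irrefl x (hB x hxB).1
    · rw [mem_singleton.mp hx] at hxB
      exact G.loopless.irrefl b (hB b hxB).2
  · intro x hx y hy
    rcases mem_insert.mp hx with rfl | hx
    · exact (hB y hy).1
    · exact mem_singleton.mp hx ▸ (hB y hy).2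

theorem sum_degree_mul_degree_sub_one :
    ∑ v, G.degree v * (G.degree v - 1) =
      ∑ p ∈ (univ : Finset V).offDiag, #(G.neighborFinset p.1 ∩ G.neighborFinset p.2) := by
  have key := sum_card_bipartiteAbove_eq_sum_card_bipartiteBelow (s := (univ : Finset V))
    (t := univ.offDiag) (r := fun v p => G.Adj v p.1 ∧ G.Adj v p.2)
  convert key using 2 with v _ p _
  · rw [← card_neighborFinset_eq_degree, Nat.mul_sub_one, ← offDiag_card]
    congr 1
    ext p
    simp [bipartiteAbove, and_comm, and_left_comm]
  · congr 1
    ext v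
    simp [bipartiteBelow, adj_comm]

theorem sum_degree_mul_degree_sub_one_le {k : ℕ}
    (h : ∀ a b, a ≠ b → #(G.neighborFinset a ∩ G.neighborFinset b) ≤ k) :
    ∑ v, G.degree v * (G.degree v - 1) ≤
      k * (Fintype.card V * Fintype.card V - Fintype.card V) := by
  rw [sum_degree_mul_degree_sub_one, ← card_univ, ← offDiag_card, mul_comm, ← smul_eq_mul,
    ← sum_const]
  exact sum_le_sum fun p hp => h p.1 p.2 (mem_offDiag.mp hp).2.2

theorem four_mul_card_edgeFinset_sq_le {k : ℕ}
    (h : ∀ a b, a ≠ b → #(G.neighborFinset a ∩ G.neighborFinset b) ≤ k) :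
    4 * #G.edgeFinset ^ 2 ≤
      k * Fintype.card V ^ 3 + 2 * #G.edgeFinset * Fintype.card V := by
  set n := Fintype.card V
  set e := #G.edgeFinset
  have hsq : ∑ v, G.degree v ^ 2 = ∑ v, G.degree v * (G.degree v - 1) + 2 * e := by
    rw [← sum_degrees_eq_twice_card_edges, ← sum_add_distrib]
    refine sum_congr rfl fun v _ => ?_
    rw [Nat.mul_sub_one, Nat.sub_add_cancel (Nat.le_mul_self _), sq]
  have hCS : (2 * e) ^ 2 ≤ n * ∑ v, G.degree v ^ 2 := by
    have := sq_sum_le_card_mul_sum_sq (s := univ) (f := fun v => G.degree v)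
    rwa [sum_degrees_eq_twice_card_edges, card_univ] at this
  calc 4 * e ^ 2 = (2 * e) ^ 2 := by ring
    _ ≤ n * (k * (n * n) + 2 * e) := by
      refine hCS.trans ?_
      rw [hsq]
      gcongr
      exact (G.sum_degree_mul_degree_sub_one_le h).trans (by gcongr; exact Nat.sub_le _ _)
    _ = k * n ^ 3 + 2 * e * n := by ring

end SimpleGraph

theorem le_half_mul_sqrt_mul_rpow_three_halves_add_half {e n k : ℝ} (hn : 0 ≤ n) (hk : 0 ≤ k)
    (h : 4 * e ^ 2 ≤ k * n ^ 3 + 2 * e * n) :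
    e ≤ 1 / 2 * √k * n ^ ((3 : ℝ) / 2) + n / 2 := by
  set x := √k * n ^ ((3 : ℝ) / 2)
  have hx : 0 ≤ x := by positivity
  have hx2 : x ^ 2 = k * n ^ 3 := by
    rw [mul_pow, Real.sq_sqrt hk, ← Real.rpow_mul_natCast hn]
    norm_num
  by_contra! hlt
  nlinarith

theorem Nat.cast_le_rpow_three_halves (n : ℕ) : (n : ℝ) ≤ (n : ℝ) ^ ((3 : ℝ) / 2) := by
  rcases Nat.eq_zero_or_pos n with rfl | hn
  · norm_num
  · exact Real.self_le_rpow_of_one_le (by exact_mod_cast hn) (by norm_num)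

theorem stmt1_general (n t : ℕ) (ht : 2 ≤ t)
    (G : SimpleGraph (Fin n)) [DecidableRel G.Adj]
    (hfree : ¬ ∃ A B : Finset (Fin n), Disjoint A B ∧ A.card = 2 ∧ B.card = t ∧
      ∀ a ∈ A, ∀ b ∈ B, G.Adj a b) :
    (G.edgeFinset.card : ℝ) ≤
        (1 / 2) * Real.sqrt (t - 1) * (n : ℝ) ^ ((3 : ℝ) / 2) + n / 2 ∧
      (G.edgeFinset.card : ℝ) ≤ Real.sqrt t * (n : ℝ) ^ ((3 : ℝ) / 2) := by
  have hcommon : ∀ a b : Fin n, a ≠ b → #(G.neighborFinset a ∩ G.neighborFinset b) ≤ t - 1 :=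
    fun a b hab => by
      by_contra! hlt
      exact hfree (G.exists_completeBipartite_two_of_le_card_inter_neighborFinset hab (by omega))
  have hcount : 4 * (#G.edgeFinset : ℝ) ^ 2 ≤
      ((t : ℝ) - 1) * (n : ℝ) ^ 3 + 2 * #G.edgeFinset * n := by
    have := G.four_mul_card_edgeFinset_sq_le hcommon
    rw [Fintype.card_fin] at this
    have hR : ((4 * #G.edgeFinset ^ 2 : ℕ) : ℝ) ≤
        (((t - 1) * n ^ 3 + 2 * #G.edgeFinset * n : ℕ) : ℝ) := by exact_mod_cast this
    push_cast [Nat.cast_sub (by omega : 1 ≤ t)] at hR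
    exact hR
  have htR : (2 : ℝ) ≤ t := by exact_mod_cast ht
  have hfirst := le_half_mul_sqrt_mul_rpow_three_halves_add_half (Nat.cast_nonneg n)
    (by linarith) hcount
  refine ⟨hfirst, hfirst.trans ?_⟩
  have hsqrt : √((t : ℝ) - 1) ≤ √t := Real.sqrt_le_sqrt (by linarith)
  have hone : 1 ≤ √(t : ℝ) := Real.one_le_sqrt.mpr (by linarith)
  nlinarith [Nat.cast_le_rpow_three_halves n, (by positivity : 0 ≤ (n : ℝ) ^ ((3 : ℝ) / 2))]

/-- Kővári–Sós–Turán bound for `K_{2,t}`: any `n`-vertex graph containing no copy of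
`K_{2,t}` has at most `(1/2)√(t-1) n^{3/2} + n/2 ≤ √t · n^{3/2}` edges. -/
theorem stmt1 (n t : ℕ) (ht : 2 ≤ t) (htn : t ≤ n)
    (G : SimpleGraph (Fin n)) [DecidableRel G.Adj]
    (hfree : ¬ ∃ A B : Finset (Fin n), Disjoint A B ∧ A.card = 2 ∧ B.card = t ∧
      ∀ a ∈ A, ∀ b ∈ B, G.Adj a b) :
    (G.edgeFinset.card : ℝ) ≤
        (1 / 2) * Real.sqrt (t - 1) * (n : ℝ) ^ ((3 : ℝ) / 2) + n / 2 ∧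
      (G.edgeFinset.card : ℝ) ≤ Real.sqrt t * (n : ℝ) ^ ((3 : ℝ) / 2) :=
  stmt1_general n t ht G hfree
end

section
/- Let p be an odd prime and consider the graph G⁺(p², p): the vertex set is (F_{p²}/H) × F_{p²}* where F_{p²} = Z_p[x]/(f(x)) for an irreducible quadratic f, H = {0, x, 2x, ..., (p−1)x} is the additive subgroup of order p generated by x, and (ā,u) is adjacent to (b̄,v) iff uv ∈ ā+b̄. Then the independence number of G⁺(p², p) is at least ⌊p²/2⌋; specifically, taking g a generator of F_{p²}*, the set {(0̄, g^{2k}) : 0 ≤ k < p²/2} is independent. -/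
/-!
If `g ^ (2j) * g ^ (2k)` were an integer multiple `n • g`, then `g ^ (2(j+k) - 1)` would be the
element `n` of the prime field, which is fixed by Frobenius. Hence the order `p² - 1` of `g`
divides `(2(j+k) - 1)(p - 1)`, i.e. the even number `p + 1` divides an odd one.
-/

/-- The adjacency relation of the graph `G⁺`. -/
def adjPlus {F : Type} [Field F] (H : AddSubgroup F)
    (v w : (F ⧸ H) × Fˣ) : Prop :=
  (QuotientAddGroup.mk ((v.2 : F) * (w.2 : F)) : F ⧸ H) = v.1 + w.1

lemma Int.not_sq_sub_one_dvd_mul_of_odd {p : ℤ} (hp : Odd p) (hp₁ : p ≠ 1) (a : ℤ) :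
    ¬ (p ^ 2 - 1) ∣ (2 * a - 1) * (p - 1) := by
  intro h
  have hsplit : p ^ 2 - 1 = (p + 1) * (p - 1) := by ring
  rw [hsplit, mul_dvd_mul_iff_right (sub_ne_zero.mpr hp₁)] at h
  have heven : (2 : ℤ) ∣ p + 1 := even_iff_two_dvd.mp hp.add_one
  obtain ⟨t, ht⟩ := heven.trans h
  omega

lemma pow_injOn_Iio_of_two_mul_le {G : Type*} [Monoid G] {x : G} {N : ℕ}
    (hN : 2 * N ≤ orderOf x + 1) : (Set.Iio N).InjOn (fun k => x ^ (2 * k)) := by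
  have hlt : ∀ c ∈ Set.Iio N, 2 * c ∈ Set.Iio (orderOf x) := fun c hc => by
    rw [Set.mem_Iio] at hc ⊢; omega
  intro a ha b hb hab
  exact Nat.eq_of_mul_eq_mul_left two_pos (pow_injOn_Iio_orderOf (hlt a ha) (hlt b hb) hab)

section Field

variable {F : Type} [Field F]

lemma adjPlus_zero_iff (H : AddSubgroup F) (u v : Fˣ) :
    adjPlus H (0, u) (0, v) ↔ (u * v : F) ∈ H := by
  rw [adjPlus, add_zero, QuotientAddGroup.eq_zero_iff]

lemma orderOf_dvd_mul_of_zpow_eq_intCast (p : ℕ) [ExpChar F p] {g : Fˣ} {m n : ℤ}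
    (h : ((g ^ m : Fˣ) : F) = n) : (orderOf g : ℤ) ∣ m * (p - 1) := by
  have hfix : (g ^ m) ^ (p : ℤ) = g ^ m := by
    ext
    rw [zpow_natCast, Units.val_pow_eq_pow_val, h, ← frobenius_def, map_intCast]
  rw [orderOf_dvd_iff_zpow_eq_one, zpow_mul, zpow_sub_one, hfix, mul_inv_cancel]

lemma not_adjPlus_zero_pow_two_mul {p : ℕ} (hodd : Odd p) (hp₁ : p ≠ 1) [ExpChar F p]
    {g : Fˣ} (horder : orderOf g = p ^ 2 - 1) (j k : ℕ) :
    ¬ adjPlus (AddSubgroup.zmultiples (g : F)) (0, g ^ (2 * j)) (0, g ^ (2 * k)) := by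
  rw [adjPlus_zero_iff, AddSubgroup.mem_zmultiples_iff]
  rintro ⟨n, hn⟩
  have hn' : ((g ^ (2 * (j + k)) : Fˣ) : F) = n * g := by
    rw [mul_add, pow_add, Units.val_mul, ← hn, zsmul_eq_mul]
  have hint : ((g ^ ((2 * (j + k) : ℕ) - 1 : ℤ) : Fˣ) : F) = n := by
    rw [zpow_sub_one, zpow_natCast, Units.val_mul, hn', mul_assoc, ← Units.val_mul,
      mul_inv_cancel, Units.val_one, mul_one]
  have hdvd := orderOf_dvd_mul_of_zpow_eq_intCast p hint
  rw [horder, Nat.cast_sub (Nat.one_le_pow _ _ hodd.pos)] at hdvd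
  push_cast at hdvd
  exact Int.not_sq_sub_one_dvd_mul_of_odd (by exact_mod_cast hodd) (by exact_mod_cast hp₁) _ hdvd

end Field

/-- For an odd prime `p` and `F` of order `p²`, taking `H` the additive subgroup of
order `p` generated by a generator `g` of `F*`, the set
`{(0̄, g^{2k}) : 0 ≤ k < p²/2}` is independent in `G⁺(p²,p)`; hence the independence
number of `G⁺(p²,p)` is at least `⌊p²/2⌋`. -/
theorem stmt13 (p : ℕ) (hp : p.Prime) (hodd : p ≠ 2)
    (F : Type) [Field F] [Fintype F] (hcard : Fintype.card F = p ^ 2)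
    (g : Fˣ) (hg : ∀ u : Fˣ, u ∈ Subgroup.zpowers g) :
    let H := AddSubgroup.zmultiples (g : F)
    (∀ j k : ℕ, j < p ^ 2 / 2 → k < p ^ 2 / 2 →
      ¬ adjPlus H ((0 : F ⧸ H), g ^ (2 * j)) ((0 : F ⧸ H), g ^ (2 * k))) ∧
    ∃ S : Finset ((F ⧸ H) × Fˣ), p ^ 2 / 2 ≤ S.card ∧
      ∀ v ∈ S, ∀ w ∈ S, ¬ adjPlus H v w := by
  intro H
  classical
  have : Fact p.Prime := ⟨hp⟩
  have : CharP F p := charP_of_card_eq_prime_pow hcard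
  have horder : orderOf g = p ^ 2 - 1 := by
    rw [orderOf_eq_card_of_forall_mem_zpowers hg, Nat.card_eq_fintype_card,
      Fintype.card_units, hcard]
  have hindep := not_adjPlus_zero_pow_two_mul (hp.odd_of_ne_two hodd) hp.one_lt.ne' horder
  refine ⟨fun j k _ _ => hindep j k,
    (Finset.range (p ^ 2 / 2)).image (fun k => ((0 : F ⧸ H), g ^ (2 * k))), ?_, ?_⟩
  · have hsize : 2 * (p ^ 2 / 2) ≤ orderOf g + 1 := by
      rw [horder]; have := pow_pos hp.pos 2; omega
    rw [Finset.card_image_of_injOn, Finset.card_range]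
    rw [Finset.coe_range]
    exact (Prod.mk_right_injective _).comp_injOn (pow_injOn_Iio_of_two_mul_le hsize)
  · simp only [Finset.forall_mem_image]
    exact fun j _ k _ => hindep j k
end
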